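/- There exists an uncountable family F of injective functions from ℕ to ℕ such that for any two distinct f, g in F: (1) f(n) ≠ g(n) for all but finitely many n, and (2) f(n) ≠ g(m) for all n ≠ m. -/
import Mathlib

noncomputable def branch (x : ℕ → Bool) : ℕ → ℕ :=
  fun n => Encodable.encode (List.ofFn (fun i : Fin (n + 1) => x i))

lemma branch_inj_aux {x y : ℕ → Bool} {n m : ℕ} (h : branch x n = branch y m) :
    List.ofFn (fun i : Fin (n + 1) => x i) = List.ofFn (fun i : Fin (m + 1) => y i) :=
  Encodable.encode_injective h

lemma branch_len {x y : ℕ → Bool} {n m : ℕ} (h : branch x n = branch y m) : n = m := by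
  have := congrArg List.length (branch_inj_aux h)
  simpa using this

lemma branch_injective : Function.Injective branch := by
  intro x y h
  funext k
  have h1 : branch x k = branch y k := congrFun h k
  have := branch_inj_aux h1
  have := congrFun (List.ofFn_injective this) ⟨k, Nat.lt_succ_self k⟩
  simpa using this

theorem stmt0 :
    ∃ F : Set (ℕ → ℕ),
      ¬ F.Countable ∧
      (∀ f ∈ F, Function.Injective f) ∧
      (∀ f ∈ F, ∀ g ∈ F, f ≠ g →
        {n : ℕ | f n = g n}.Finite ∧ ∀ n m : ℕ, n ≠ m → f n ≠ g m) := by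
  refine ⟨Set.range branch, ?_, ?_, ?_⟩
  · intro hc
    have : Countable (Set.range branch) := hc.to_subtype
    have h2 : Countable (ℕ → Bool) :=
      Countable.of_equiv _ (Equiv.ofInjective branch branch_injective).symm
    have h3 : Countable (Set ℕ) :=
      Countable.of_equiv _ (Equiv.arrowCongr (Equiv.refl ℕ) Equiv.propEquivBool.symm)
    obtain ⟨f, hf⟩ := (countable_iff_exists_injective (Set ℕ)).mp h3
    exact Function.cantor_injective f hf
  · rintro f ⟨x, rfl⟩ n m h
    exact branch_len h
  · rintro f ⟨x, rfl⟩ g ⟨y, rfl⟩ hne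
    constructor
    · have hxy : x ≠ y := fun h => hne (congrArg branch h)
      obtain ⟨k, hk⟩ : ∃ k, x k ≠ y k := by
        by_contra h; push_neg at h; exact hxy (funext h)
      apply Set.Finite.subset (Set.finite_Iio k)
      intro n hn
      simp only [Set.mem_setOf_eq] at hn
      by_contra hnk
      simp only [Set.mem_Iio, not_lt] at hnk
      have hl := branch_inj_aux hn
      have := congrFun (List.ofFn_injective hl) ⟨k, Nat.lt_succ_of_le hnk⟩
      exact hk (by simpa using this)
    · intro n m hnm h
      exact hnm (branch_len h)
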